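/- Let n ≥ 3 be odd and let μ ∈ ℝ satisfy a_{(n−1)/2}(μ) = a_{(n−3)/2}(μ). Then a_{n−1}(μ) = 0 and a_{n−2}(μ) = 1. -/

import Mathlib

/-!
Writing `x = 1 - μ`, `a μ n` is the Chebyshev polynomial `Uₙ(x)`. The addition formula gives
`a (2m+2) = a (m+1)² - a m²` and `a (2m+1) = 2 a m (a (m+1) - x a m)`, while the invariant
`a (m+1)² - 2x a (m+1) a m + a m² = 1` of the recurrence pins down `2 (1 - x) a m² = 1`
once `a (m+1) = a m`. For `n = 2m+3` these are the two claims.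
-/

noncomputable def a (μ : ℝ) : ℕ → ℝ
  | 0 => 1
  | 1 => 2 * (1 - μ)
  | n + 2 => 2 * (1 - μ) * a μ (n + 1) - a μ n

section

variable (μ : ℝ)

lemma a_add_two (n : ℕ) : a μ (n + 2) = 2 * (1 - μ) * a μ (n + 1) - a μ n := rfl

lemma a_add_add_one (p q : ℕ) :
    a μ (p + q + 1) =
      a μ (p + 1) * a μ q - 2 * (1 - μ) * a μ p * a μ q + a μ p * a μ (q + 1) := by
  induction q using Nat.twoStepInduction with
  | zero => simp only [a]; ring
  | one => rw [a_add_two]; simp only [a]; ring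
  | more q ih ih' =>
    rw [← add_assoc, a_add_two μ q] at ih'
    rw [show p + (q + 2) + 1 = p + q + 1 + 2 by ring, a_add_two, a_add_two μ (q + 1),
      a_add_two μ q]
    linear_combination 2 * (1 - μ) * ih' - ih

lemma a_sq_sub_mul_add_sq (m : ℕ) :
    a μ (m + 1) ^ 2 - 2 * (1 - μ) * a μ (m + 1) * a μ m + a μ m ^ 2 = 1 := by
  induction m with
  | zero => simp only [a]; ring
  | succ m ih => rw [a_add_two]; linear_combination ih

lemma a_two_mul_add_one (m : ℕ) :
    a μ (2 * m + 1) = 2 * a μ m * (a μ (m + 1) - (1 - μ) * a μ m) := by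
  rw [two_mul, a_add_add_one]; ring

lemma a_two_mul_add_two (m : ℕ) : a μ (2 * m + 2) = a μ (m + 1) ^ 2 - a μ m ^ 2 := by
  rw [show 2 * m + 2 = m + 1 + m + 1 by ring, a_add_add_one, a_add_two]; ring

end

theorem stmt10 (n : ℕ) (hn : 3 ≤ n) (hodd : Odd n) (μ : ℝ)
    (h : a μ ((n - 1) / 2) = a μ ((n - 3) / 2)) :
    a μ (n - 1) = 0 ∧ a μ (n - 2) = 1 := by
  obtain ⟨m, rfl⟩ : ∃ m, n = 2 * m + 3 := by
    obtain ⟨k, rfl⟩ := hodd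
    exact ⟨k - 1, by omega⟩
  rw [show (2 * m + 3 - 1) / 2 = m + 1 by omega, show (2 * m + 3 - 3) / 2 = m by omega] at h
  rw [show 2 * m + 3 - 1 = 2 * m + 2 by omega, show 2 * m + 3 - 2 = 2 * m + 1 by omega,
    a_two_mul_add_two, a_two_mul_add_one, h]
  have hinv := a_sq_sub_mul_add_sq μ m
  rw [h] at hinv
  exact ⟨by ring, by linear_combination hinv⟩
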